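/- Let y = Xβ* + ε with β* supported on S, let Π_S be the orthogonal projection onto span{X_j : j ∈ S} and Π_S^⊥ = I − Π_S, and set Z = Π_S^⊥ X_{S^c} and ξ = Π_S^⊥ ε. Consider (P1): minimize (1/n)‖ξ − Z β^{(P1)}‖₂² over β^{(P1)} ⪰ 0, with minimizer β̂^{(P1)}, and (P2): minimize (1/n)‖Π_S ε + X_S β*_S − X_S β^{(P2)} − Π_S X_{S^c} β̂^{(P1)}‖₂² over β^{(P2)} ⪰ 0, with minimizer β̂^{(P2)}. If β̂^{(P2)} has all entries strictly positive, then the vector β̂ defined by β̂_S = β̂^{(P2)} and β̂_{S^c} = β̂^{(P1)} is a minimizer of the full NNLS problem min_{β⪰0}(1/n)‖y − Xβ‖₂². -/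

import Mathlib

/-!
Write `β = β_S + β_{S^c}` and `K = span {X_j : j ∈ S}`. Splitting the residual `y - Xβ` into
its components in `K` and in `Kᗮ` (Pythagoras) turns the NNLS objective into the (P2) objective
at `β_S` plus the (P1) objective at `β_{S^c}`, where (P2) is taken with `β_{S^c}` in place of
`β̂^{(P1)}`. The (P1) part is smallest at `β̂^{(P1)}`. Since `β̂^{(P2)}` lies in the interior of
the constraint set on `S`, its residual is orthogonal to every column `X_j`, `j ∈ S`; that
residual also lies in `K`, so it vanishes and the (P2) part is zero at `β̂`.
-/

open Matrix Finset

noncomputable section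

/-- Squared Euclidean norm of a vector. -/
def sqNorm {n : ℕ} (v : Fin n → ℝ) : ℝ := ∑ i, (v i) ^ 2

/-- `b` is a minimizer of the NNLS problem `min_{β ⪰ 0} (1/n)‖y − Xβ‖₂²`. -/
def IsNNLSMin {n p : ℕ} (X : Matrix (Fin n) (Fin p) ℝ) (y : Fin n → ℝ)
    (b : Fin p → ℝ) : Prop :=
  (∀ j, 0 ≤ b j) ∧ ∀ β : Fin p → ℝ, (∀ j, 0 ≤ β j) →
    (1 / (n : ℝ)) * sqNorm (y - X.mulVec b) ≤ (1 / (n : ℝ)) * sqNorm (y - X.mulVec β)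

/-- Orthogonal projection Π_S onto the span of the columns of `X` indexed by `S`. -/
def projS {n p : ℕ} (X : Matrix (Fin n) (Fin p) ℝ) (S : Finset (Fin p))
    (v : Fin n → ℝ) : Fin n → ℝ :=
  WithLp.equiv 2 (Fin n → ℝ) (Submodule.orthogonalProjectionOnto
      (Submodule.span ℝ ((fun j => (WithLp.equiv 2 (Fin n → ℝ)).symm (X.transpose j)) '' S))
      ((WithLp.equiv 2 (Fin n → ℝ)).symm v) : EuclideanSpace ℝ (Fin n))

namespace NNLS

variable {n p : ℕ}

lemma sqNorm_eq_norm_toLp_sq (v : Fin n → ℝ) : sqNorm v = ‖WithLp.toLp 2 v‖ ^ 2 := by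
  simp [sqNorm, EuclideanSpace.norm_sq_eq]

lemma sqNorm_nonneg (v : Fin n → ℝ) : 0 ≤ sqNorm v := by
  unfold sqNorm; positivity

lemma sqNorm_zero : sqNorm (0 : Fin n → ℝ) = 0 := by
  simp [sqNorm]

section InnerProductSpace

variable {E : Type*} [NormedAddCommGroup E] [InnerProductSpace ℝ E]

lemma inner_eq_zero_of_isLocalMin {r v : E} (h : IsLocalMin (fun t : ℝ => ‖r - t • v‖ ^ 2) 0) :
    inner ℝ r v = 0 := by
  have hline : HasDerivAt (fun t : ℝ => r - t • v) (-v) 0 := by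
    simpa using ((hasDerivAt_id (0 : ℝ)).smul_const v).const_sub r
  simpa using h.hasDerivAt_eq_zero hline.norm_sq

/-- Pythagoras for the splitting of a residual into its components in `K` and `Kᗮ`. -/
lemma norm_add_sub_add_sq {K : Submodule ℝ E} [K.HasOrthogonalProjection] {s k : E}
    (hs : s ∈ K) (hk : k ∈ K) (e x : E) :
    ‖s + e - (k + x)‖ ^ 2 = ‖K.starProjection e + s - k - K.starProjection x‖ ^ 2
      + ‖(e - K.starProjection e) - (x - K.starProjection x)‖ ^ 2 := by
  have hK : K.starProjection e + s - k - K.starProjection x ∈ K :=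
    K.sub_mem (K.sub_mem (K.add_mem (K.starProjection_apply_mem e) hs) hk)
      (K.starProjection_apply_mem x)
  have hKperp : (e - K.starProjection e) - (x - K.starProjection x) ∈ Kᗮ :=
    Kᗮ.sub_mem (K.sub_starProjection_mem_orthogonal e) (K.sub_starProjection_mem_orthogonal x)
  rw [show s + e - (k + x) = (K.starProjection e + s - k - K.starProjection x)
      + ((e - K.starProjection e) - (x - K.starProjection x)) by abel,
    norm_add_sq_real, Submodule.inner_right_of_mem_orthogonal hK hKperp, mul_zero, add_zero]

end InnerProductSpace

def colSpan (X : Matrix (Fin n) (Fin p) ℝ) (S : Finset (Fin p)) :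
    Submodule ℝ (EuclideanSpace ℝ (Fin n)) :=
  Submodule.span ℝ ((fun j => WithLp.toLp 2 (X.col j)) '' S)

variable {X : Matrix (Fin n) (Fin p) ℝ} {S : Finset (Fin p)}

lemma toLp_projS (v : Fin n → ℝ) :
    WithLp.toLp 2 (projS X S v) = (colSpan X S).starProjection (WithLp.toLp 2 v) := rfl

lemma toLp_projS_mem (v : Fin n → ℝ) : WithLp.toLp 2 (projS X S v) ∈ colSpan X S :=
  Submodule.starProjection_apply_mem _ _

lemma toLp_mulVec_mem {β : Fin p → ℝ} (hβ : ∀ j ∉ S, β j = 0) :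
    WithLp.toLp 2 (X *ᵥ β) ∈ colSpan X S := by
  rw [Matrix.mulVec_eq_sum, WithLp.toLp_sum]
  refine Submodule.sum_mem _ fun j _ => ?_
  by_cases hj : j ∈ S
  · rw [op_smul_eq_smul, WithLp.toLp_smul]
    exact Submodule.smul_mem _ _ (Submodule.subset_span ⟨j, hj, rfl⟩)
  · simp [hβ j hj]

lemma sqNorm_add_sub_mulVec_add {βstar βS : Fin p → ℝ} (hstar : ∀ j ∉ S, βstar j = 0)
    (hS : ∀ j ∉ S, βS j = 0) (ε : Fin n → ℝ) (βSc : Fin p → ℝ) :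
    sqNorm (X *ᵥ βstar + ε - X *ᵥ (βS + βSc))
      = sqNorm (projS X S ε + X *ᵥ βstar - X *ᵥ βS - projS X S (X *ᵥ βSc))
        + sqNorm ((ε - projS X S ε) - (X *ᵥ βSc - projS X S (X *ᵥ βSc))) := by
  simp only [sqNorm_eq_norm_toLp_sq, Matrix.mulVec_add, WithLp.toLp_add, WithLp.toLp_sub,
    toLp_projS]
  exact norm_add_sub_add_sq (toLp_mulVec_mem hstar) (toLp_mulVec_mem hS) _ _

section Fit

variable {c : Fin n → ℝ} {b : Fin p → ℝ} (hb : ∀ j ∈ S, 0 < b j) (hsupp : ∀ j ∉ S, b j = 0)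
  (hmin : ∀ β : Fin p → ℝ, (∀ j, 0 ≤ β j) → (∀ j ∉ S, β j = 0) →
    sqNorm (c - X *ᵥ b) ≤ sqNorm (c - X *ᵥ β))
include hb hsupp hmin

/-- Moving the coordinate `j ∈ S` of `b` a little in either direction stays feasible. -/
lemma isLocalMin_norm_sub_smul_col {j : Fin p} (hj : j ∈ S) :
    IsLocalMin (fun t : ℝ => ‖WithLp.toLp 2 (c - X *ᵥ b) - t • WithLp.toLp 2 (X.col j)‖ ^ 2)
      0 := by
  have hb0 : ∀ k, 0 ≤ b k := fun k =>
    if hk : k ∈ S then (hb k hk).le else (hsupp k hk).ge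
  filter_upwards [Ioo_mem_nhds (neg_lt_zero.2 (hb j hj)) (hb j hj)] with t ht
  set β : Fin p → ℝ := b + t • Pi.single j 1
  have hfeas : ∀ k, 0 ≤ β k := by
    intro k
    rcases eq_or_ne k j with rfl | hk
    · simpa [β, add_comm] using (neg_lt_iff_pos_add.1 ht.1).le
    · simpa [β, Pi.single_eq_of_ne hk] using hb0 k
  have hsupp' : ∀ k ∉ S, β k = 0 := fun k hk => by
    simp [β, hsupp k hk, Pi.single_eq_of_ne (show k ≠ j by rintro rfl; exact hk hj)]
  have hβ : WithLp.toLp 2 (c - X *ᵥ β)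
      = WithLp.toLp 2 (c - X *ᵥ b) - t • WithLp.toLp 2 (X.col j) := by
    rw [Matrix.mulVec_add, Matrix.mulVec_smul, Matrix.mulVec_single_one, sub_add_eq_sub_sub,
      WithLp.toLp_sub, WithLp.toLp_smul]
  have := hmin β hfeas hsupp'
  rw [sqNorm_eq_norm_toLp_sq, sqNorm_eq_norm_toLp_sq, hβ] at this
  simpa only [zero_smul, sub_zero] using this

lemma mulVec_eq_of_forall_sqNorm_le (hc : WithLp.toLp 2 c ∈ colSpan X S) : X *ᵥ b = c := by
  set r := WithLp.toLp 2 (c - X *ᵥ b) with hr_def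
  have hr : r ∈ colSpan X S := by
    rw [hr_def, WithLp.toLp_sub]; exact (colSpan X S).sub_mem hc (toLp_mulVec_mem hsupp)
  have hle : colSpan X S ≤ (ℝ ∙ r)ᗮ := Submodule.span_le.2 <| by
    rintro _ ⟨j, hj, rfl⟩
    exact Submodule.mem_orthogonal_singleton_iff_inner_right.2
      (inner_eq_zero_of_isLocalMin (isLocalMin_norm_sub_smul_col hb hsupp hmin hj))
  have hr0 : r = 0 :=
    inner_self_eq_zero.1 (Submodule.mem_orthogonal_singleton_iff_inner_right.1 (hle hr))
  exact (sub_eq_zero.1 (congrArg WithLp.ofLp hr0)).symm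

end Fit

end NNLS

open NNLS

/-- Coefficient vectors over `S^c` (resp. over `S`) are encoded as vectors in ℝ^p vanishing
on `S` (resp. on `S^c`); then `Z β^{(P1)} = Π_S^⊥ X β^{(P1)}`, `X_S β*_S = X β*`, etc. -/
theorem stmt_7 (n p : ℕ) (hn : 0 < n) (X : Matrix (Fin n) (Fin p) ℝ)
    (βstar : Fin p → ℝ) (hβstar : ∀ j, 0 ≤ βstar j)
    (S : Finset (Fin p)) (hS : ∀ j, j ∈ S ↔ 0 < βstar j)
    (ε : Fin n → ℝ)
    (βP1 : Fin p → ℝ) (hP1pos : ∀ j, 0 ≤ βP1 j) (hP1supp : ∀ j ∈ S, βP1 j = 0)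
    (hP1min : ∀ β : Fin p → ℝ, (∀ j, 0 ≤ β j) → (∀ j ∈ S, β j = 0) →
      (1 / (n : ℝ)) * sqNorm ((ε - projS X S ε) - (X.mulVec βP1 - projS X S (X.mulVec βP1)))
        ≤ (1 / (n : ℝ)) * sqNorm ((ε - projS X S ε) - (X.mulVec β - projS X S (X.mulVec β))))
    (βP2 : Fin p → ℝ) (hP2pos : ∀ j, 0 ≤ βP2 j) (hP2supp : ∀ j ∉ S, βP2 j = 0)
    (hP2min : ∀ β : Fin p → ℝ, (∀ j, 0 ≤ β j) → (∀ j ∉ S, β j = 0) →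
      (1 / (n : ℝ)) * sqNorm (projS X S ε + X.mulVec βstar - X.mulVec βP2
          - projS X S (X.mulVec βP1))
        ≤ (1 / (n : ℝ)) * sqNorm (projS X S ε + X.mulVec βstar - X.mulVec β
          - projS X S (X.mulVec βP1)))
    (hpos : ∀ j ∈ S, 0 < βP2 j) :
    IsNNLSMin X (X.mulVec βstar + ε) (fun j => if j ∈ S then βP2 j else βP1 j) := by
  have hβstar_supp : ∀ j ∉ S, βstar j = 0 := fun j hj =>
    le_antisymm (not_lt.1 fun h => hj ((hS j).2 h)) (hβstar j)
  set c := projS X S ε + X *ᵥ βstar - projS X S (X *ᵥ βP1)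
  have hfit : X *ᵥ βP2 = c := by
    refine mulVec_eq_of_forall_sqNorm_le hpos hP2supp (fun β h0 hsupp => ?_) ?_
    · have := le_of_mul_le_mul_left (hP2min β h0 hsupp) (by positivity)
      rwa [sub_right_comm _ (X *ᵥ βP2), sub_right_comm _ (X *ᵥ β)] at this
    · simp only [c, WithLp.toLp_add, WithLp.toLp_sub]
      exact sub_mem (add_mem (toLp_projS_mem ε) (toLp_mulVec_mem hβstar_supp)) (toLp_projS_mem _)
  have hcomb : (fun j => if j ∈ S then βP2 j else βP1 j) = βP2 + βP1 := by
    funext j; by_cases hj : j ∈ S <;> simp [hj, hP1supp, hP2supp]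
  rw [hcomb]
  refine ⟨fun j => add_nonneg (hP2pos j) (hP1pos j), fun β hβ => ?_⟩
  set βS : Fin p → ℝ := fun j => if j ∈ S then β j else 0
  set βSc : Fin p → ℝ := fun j => if j ∈ S then 0 else β j
  have hβS : ∀ j ∉ S, βS j = 0 := fun j hj => if_neg hj
  have hβSc : ∀ j ∈ S, βSc j = 0 := fun j hj => if_pos hj
  have hsplit : β = βS + βSc := by
    funext j; by_cases hj : j ∈ S <;> simp [βS, βSc, hj]
  rw [sqNorm_add_sub_mulVec_add hβstar_supp hP2supp, sub_right_comm _ (X *ᵥ βP2), hfit,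
    sub_self, sqNorm_zero, zero_add, hsplit, sqNorm_add_sub_mulVec_add hβstar_supp hβS]
  calc _ ≤ 1 / (n : ℝ) * sqNorm ((ε - projS X S ε) - (X *ᵥ βSc - projS X S (X *ᵥ βSc))) :=
        hP1min βSc (fun j => by by_cases hj : j ∈ S <;> simp [βSc, hj, hβ j]) hβSc
    _ ≤ _ := by gcongr; exact le_add_of_nonneg_left (sqNorm_nonneg _)
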